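/- On the D3Q19 lattice, the antisymmetric subspace A ⊂ ℝ¹⁹ has dimension 9 and is exactly spanned by the three first-order modes e_{iα} (α ∈ {x,y,z}) and the six third-order modes ψᵢ^{(ααβ)} = e_{iβ}(e_{iα}² - c_s²) for ordered pairs α ≠ β; i.e., dim A = D + N₃ = 3 + 6. -/
import Mathlib


open Finset

/-- The D3Q19 velocities: rest, 6 axial, 12 face-diagonal. -/
noncomputable def E19 (c : ℝ) : Fin 19 → Fin 3 → ℝ :=
  ![![0,0,0],
    ![c,0,0], ![-c,0,0], ![0,c,0], ![0,-c,0], ![0,0,c], ![0,0,-c],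
    ![c,c,0], ![-c,-c,0], ![c,-c,0], ![-c,c,0],
    ![c,0,c], ![-c,0,-c], ![c,0,-c], ![-c,0,c],
    ![0,c,c], ![0,-c,-c], ![0,c,-c], ![0,-c,c]]

/-- The D3Q19 weights. -/
noncomputable def w19 : Fin 19 → ℝ :=
  ![1/3, 1/18, 1/18, 1/18, 1/18, 1/18, 1/18,
    1/36, 1/36, 1/36, 1/36, 1/36, 1/36, 1/36, 1/36, 1/36, 1/36, 1/36, 1/36]

/-- Velocity inversion on D3Q19 indices: `E19 (bar19 i) = - E19 i`. -/
def bar19 : Fin 19 → Fin 19 :=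
  ![0, 2, 1, 4, 3, 6, 5, 8, 7, 10, 9, 12, 11, 14, 13, 16, 15, 18, 17]

/-- Squared sound speed. -/
noncomputable def cs2 (c : ℝ) : ℝ := c ^ 2 / 3

/-- The antisymmetric subspace of `ℝ¹⁹` under velocity inversion. -/
def A19 : Submodule ℝ (Fin 19 → ℝ) where
  carrier := {f | ∀ i, f (bar19 i) = -f i}
  add_mem' := by intro a b ha hb i; simp [ha i, hb i]; ring
  zero_mem' := by intro i; simp
  smul_mem' := by intro r a ha i; simp [ha i]

/-- The nine antisymmetric modes of D3Q19: the three first-order modes `e_{iα}` and the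
six third-order modes `ψᵢ^{(ααβ)} = e_{iβ}(e_{iα}² - c_s²)` for ordered pairs `α ≠ β`. -/
noncomputable def antisymModes19 (c : ℝ) : Fin 9 → Fin 19 → ℝ :=
  ![fun i => E19 c i 0, fun i => E19 c i 1, fun i => E19 c i 2,
    fun i => E19 c i 1 * (E19 c i 0 ^ 2 - cs2 c),
    fun i => E19 c i 2 * (E19 c i 0 ^ 2 - cs2 c),
    fun i => E19 c i 0 * (E19 c i 1 ^ 2 - cs2 c),
    fun i => E19 c i 2 * (E19 c i 1 ^ 2 - cs2 c),
    fun i => E19 c i 0 * (E19 c i 2 ^ 2 - cs2 c),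
    fun i => E19 c i 1 * (E19 c i 2 ^ 2 - cs2 c)]

@[simp] lemma bar19e_0 : bar19 0 = 0 := rfl
@[simp] lemma bar19e_1 : bar19 1 = 2 := rfl
@[simp] lemma bar19e_2 : bar19 2 = 1 := rfl
@[simp] lemma bar19e_3 : bar19 3 = 4 := rfl
@[simp] lemma bar19e_4 : bar19 4 = 3 := rfl
@[simp] lemma bar19e_5 : bar19 5 = 6 := rfl
@[simp] lemma bar19e_6 : bar19 6 = 5 := rfl
@[simp] lemma bar19e_7 : bar19 7 = 8 := rfl
@[simp] lemma bar19e_8 : bar19 8 = 7 := rfl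
@[simp] lemma bar19e_9 : bar19 9 = 10 := rfl
@[simp] lemma bar19e_10 : bar19 10 = 9 := rfl
@[simp] lemma bar19e_11 : bar19 11 = 12 := rfl
@[simp] lemma bar19e_12 : bar19 12 = 11 := rfl
@[simp] lemma bar19e_13 : bar19 13 = 14 := rfl
@[simp] lemma bar19e_14 : bar19 14 = 13 := rfl
@[simp] lemma bar19e_15 : bar19 15 = 16 := rfl
@[simp] lemma bar19e_16 : bar19 16 = 15 := rfl
@[simp] lemma bar19e_17 : bar19 17 = 18 := rfl
@[simp] lemma bar19e_18 : bar19 18 = 17 := rfl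
@[simp] lemma E19e_0_0 (c : ℝ) : E19 c 0 0 = 0 := rfl
@[simp] lemma E19e_0_1 (c : ℝ) : E19 c 0 1 = 0 := rfl
@[simp] lemma E19e_0_2 (c : ℝ) : E19 c 0 2 = 0 := rfl
@[simp] lemma E19e_1_0 (c : ℝ) : E19 c 1 0 = c := rfl
@[simp] lemma E19e_1_1 (c : ℝ) : E19 c 1 1 = 0 := rfl
@[simp] lemma E19e_1_2 (c : ℝ) : E19 c 1 2 = 0 := rfl
@[simp] lemma E19e_2_0 (c : ℝ) : E19 c 2 0 = -c := rfl
@[simp] lemma E19e_2_1 (c : ℝ) : E19 c 2 1 = 0 := rfl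
@[simp] lemma E19e_2_2 (c : ℝ) : E19 c 2 2 = 0 := rfl
@[simp] lemma E19e_3_0 (c : ℝ) : E19 c 3 0 = 0 := rfl
@[simp] lemma E19e_3_1 (c : ℝ) : E19 c 3 1 = c := rfl
@[simp] lemma E19e_3_2 (c : ℝ) : E19 c 3 2 = 0 := rfl
@[simp] lemma E19e_4_0 (c : ℝ) : E19 c 4 0 = 0 := rfl
@[simp] lemma E19e_4_1 (c : ℝ) : E19 c 4 1 = -c := rfl
@[simp] lemma E19e_4_2 (c : ℝ) : E19 c 4 2 = 0 := rfl
@[simp] lemma E19e_5_0 (c : ℝ) : E19 c 5 0 = 0 := rfl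
@[simp] lemma E19e_5_1 (c : ℝ) : E19 c 5 1 = 0 := rfl
@[simp] lemma E19e_5_2 (c : ℝ) : E19 c 5 2 = c := rfl
@[simp] lemma E19e_6_0 (c : ℝ) : E19 c 6 0 = 0 := rfl
@[simp] lemma E19e_6_1 (c : ℝ) : E19 c 6 1 = 0 := rfl
@[simp] lemma E19e_6_2 (c : ℝ) : E19 c 6 2 = -c := rfl
@[simp] lemma E19e_7_0 (c : ℝ) : E19 c 7 0 = c := rfl
@[simp] lemma E19e_7_1 (c : ℝ) : E19 c 7 1 = c := rfl
@[simp] lemma E19e_7_2 (c : ℝ) : E19 c 7 2 = 0 := rfl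
@[simp] lemma E19e_8_0 (c : ℝ) : E19 c 8 0 = -c := rfl
@[simp] lemma E19e_8_1 (c : ℝ) : E19 c 8 1 = -c := rfl
@[simp] lemma E19e_8_2 (c : ℝ) : E19 c 8 2 = 0 := rfl
@[simp] lemma E19e_9_0 (c : ℝ) : E19 c 9 0 = c := rfl
@[simp] lemma E19e_9_1 (c : ℝ) : E19 c 9 1 = -c := rfl
@[simp] lemma E19e_9_2 (c : ℝ) : E19 c 9 2 = 0 := rfl
@[simp] lemma E19e_10_0 (c : ℝ) : E19 c 10 0 = -c := rfl
@[simp] lemma E19e_10_1 (c : ℝ) : E19 c 10 1 = c := rfl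
@[simp] lemma E19e_10_2 (c : ℝ) : E19 c 10 2 = 0 := rfl
@[simp] lemma E19e_11_0 (c : ℝ) : E19 c 11 0 = c := rfl
@[simp] lemma E19e_11_1 (c : ℝ) : E19 c 11 1 = 0 := rfl
@[simp] lemma E19e_11_2 (c : ℝ) : E19 c 11 2 = c := rfl
@[simp] lemma E19e_12_0 (c : ℝ) : E19 c 12 0 = -c := rfl
@[simp] lemma E19e_12_1 (c : ℝ) : E19 c 12 1 = 0 := rfl
@[simp] lemma E19e_12_2 (c : ℝ) : E19 c 12 2 = -c := rfl
@[simp] lemma E19e_13_0 (c : ℝ) : E19 c 13 0 = c := rfl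
@[simp] lemma E19e_13_1 (c : ℝ) : E19 c 13 1 = 0 := rfl
@[simp] lemma E19e_13_2 (c : ℝ) : E19 c 13 2 = -c := rfl
@[simp] lemma E19e_14_0 (c : ℝ) : E19 c 14 0 = -c := rfl
@[simp] lemma E19e_14_1 (c : ℝ) : E19 c 14 1 = 0 := rfl
@[simp] lemma E19e_14_2 (c : ℝ) : E19 c 14 2 = c := rfl
@[simp] lemma E19e_15_0 (c : ℝ) : E19 c 15 0 = 0 := rfl
@[simp] lemma E19e_15_1 (c : ℝ) : E19 c 15 1 = c := rfl
@[simp] lemma E19e_15_2 (c : ℝ) : E19 c 15 2 = c := rfl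
@[simp] lemma E19e_16_0 (c : ℝ) : E19 c 16 0 = 0 := rfl
@[simp] lemma E19e_16_1 (c : ℝ) : E19 c 16 1 = -c := rfl
@[simp] lemma E19e_16_2 (c : ℝ) : E19 c 16 2 = -c := rfl
@[simp] lemma E19e_17_0 (c : ℝ) : E19 c 17 0 = 0 := rfl
@[simp] lemma E19e_17_1 (c : ℝ) : E19 c 17 1 = c := rfl
@[simp] lemma E19e_17_2 (c : ℝ) : E19 c 17 2 = -c := rfl
@[simp] lemma E19e_18_0 (c : ℝ) : E19 c 18 0 = 0 := rfl
@[simp] lemma E19e_18_1 (c : ℝ) : E19 c 18 1 = -c := rfl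
@[simp] lemma E19e_18_2 (c : ℝ) : E19 c 18 2 = c := rfl
lemma modese_0 (c : ℝ) : antisymModes19 c 0 = (fun i => E19 c i 0) := rfl
lemma modese_1 (c : ℝ) : antisymModes19 c 1 = (fun i => E19 c i 1) := rfl
lemma modese_2 (c : ℝ) : antisymModes19 c 2 = (fun i => E19 c i 2) := rfl
lemma modese_3 (c : ℝ) : antisymModes19 c 3 = (fun i => E19 c i 1 * (E19 c i 0 ^ 2 - cs2 c)) := rfl
lemma modese_4 (c : ℝ) : antisymModes19 c 4 = (fun i => E19 c i 2 * (E19 c i 0 ^ 2 - cs2 c)) := rfl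
lemma modese_5 (c : ℝ) : antisymModes19 c 5 = (fun i => E19 c i 0 * (E19 c i 1 ^ 2 - cs2 c)) := rfl
lemma modese_6 (c : ℝ) : antisymModes19 c 6 = (fun i => E19 c i 2 * (E19 c i 1 ^ 2 - cs2 c)) := rfl
lemma modese_7 (c : ℝ) : antisymModes19 c 7 = (fun i => E19 c i 0 * (E19 c i 2 ^ 2 - cs2 c)) := rfl
lemma modese_8 (c : ℝ) : antisymModes19 c 8 = (fun i => E19 c i 1 * (E19 c i 2 ^ 2 - cs2 c)) := rfl


lemma sum9 {M : Type*} [AddCommMonoid M] (f : Fin 9 → M) :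
    ∑ i, f i = f 0 + (f 1 + (f 2 + (f 3 + (f 4 + (f 5 + (f 6 + (f 7 + f 8))))))) := by
  simp only [Fin.sum_univ_succ, Fin.sum_univ_zero, add_zero]
  rfl

lemma E19_bar (c : ℝ) (i : Fin 19) (α : Fin 3) : E19 c (bar19 i) α = - E19 c i α := by
  fin_cases i <;> fin_cases α <;> simp

lemma mem_A19_iff (f : Fin 19 → ℝ) : f ∈ A19 ↔ ∀ i, f (bar19 i) = -f i := Iff.rfl

lemma modes_mem (c : ℝ) (k : Fin 9) : antisymModes19 c k ∈ A19 := by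
  rw [mem_A19_iff]
  have hb := E19_bar c
  fin_cases k <;> intro i
  · show E19 c (bar19 i) 0 = -(E19 c i 0); rw [hb]
  · show E19 c (bar19 i) 1 = -(E19 c i 1); rw [hb]
  · show E19 c (bar19 i) 2 = -(E19 c i 2); rw [hb]
  · show E19 c (bar19 i) 1 * (E19 c (bar19 i) 0 ^ 2 - cs2 c)
        = -(E19 c i 1 * (E19 c i 0 ^ 2 - cs2 c)); rw [hb, hb]; ring
  · show E19 c (bar19 i) 2 * (E19 c (bar19 i) 0 ^ 2 - cs2 c)
        = -(E19 c i 2 * (E19 c i 0 ^ 2 - cs2 c)); rw [hb, hb]; ring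
  · show E19 c (bar19 i) 0 * (E19 c (bar19 i) 1 ^ 2 - cs2 c)
        = -(E19 c i 0 * (E19 c i 1 ^ 2 - cs2 c)); rw [hb, hb]; ring
  · show E19 c (bar19 i) 2 * (E19 c (bar19 i) 1 ^ 2 - cs2 c)
        = -(E19 c i 2 * (E19 c i 1 ^ 2 - cs2 c)); rw [hb, hb]; ring
  · show E19 c (bar19 i) 0 * (E19 c (bar19 i) 2 ^ 2 - cs2 c)
        = -(E19 c i 0 * (E19 c i 2 ^ 2 - cs2 c)); rw [hb, hb]; ring
  · show E19 c (bar19 i) 1 * (E19 c (bar19 i) 2 ^ 2 - cs2 c)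
        = -(E19 c i 1 * (E19 c i 2 ^ 2 - cs2 c)); rw [hb, hb]; ring

lemma modes_li (c : ℝ) (hc : 0 < c) : LinearIndependent ℝ (antisymModes19 c) := by
  rw [Fintype.linearIndependent_iff]
  intro g hg
  have hcc : (2:ℝ) * c ^ 3 ≠ 0 := by positivity
  have key : ∀ i : Fin 19, ∑ k : Fin 9, g k * antisymModes19 c k i = 0 := by
    intro i
    have := congrFun hg i
    simpa [Finset.sum_apply, Pi.smul_apply, smul_eq_mul] using this
  have h1 := key 1
  have h3 := key 3
  have h5 := key 5
  have h7 := key 7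
  have h9 := key 9
  have h11 := key 11
  have h13 := key 13
  have h15 := key 15
  have h17 := key 17
  simp only [sum9, modese_0, modese_1, modese_2, modese_3, modese_4, modese_5, modese_6,
    modese_7, modese_8, E19e_1_0, E19e_1_1, E19e_1_2, E19e_3_0, E19e_3_1, E19e_3_2,
    E19e_5_0, E19e_5_1, E19e_5_2, E19e_7_0, E19e_7_1, E19e_7_2, E19e_9_0, E19e_9_1, E19e_9_2,
    E19e_11_0, E19e_11_1, E19e_11_2, E19e_13_0, E19e_13_1, E19e_13_2,
    E19e_15_0, E19e_15_1, E19e_15_2, E19e_17_0, E19e_17_1, E19e_17_2, cs2]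
    at h1 h3 h5 h7 h9 h11 h13 h15 h17
  have e5 : 2 * c ^ 3 * g 5 = 0 := by linear_combination h7 + h9 - 2 * h1
  have g5 : g 5 = 0 := (mul_eq_zero.mp e5).resolve_left hcc
  have e7 : 2 * c ^ 3 * g 7 = 0 := by linear_combination h11 + h13 - 2 * h1
  have g7 : g 7 = 0 := (mul_eq_zero.mp e7).resolve_left hcc
  have e0 : c * g 0 = 0 := by linear_combination h1 + (c ^ 3 / 3) * g5 + (c ^ 3 / 3) * g7
  have g0 : g 0 = 0 := (mul_eq_zero.mp e0).resolve_left hc.ne'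
  have e3 : 2 * c ^ 3 * g 3 = 0 := by linear_combination h7 - h9 - 2 * h3
  have g3 : g 3 = 0 := (mul_eq_zero.mp e3).resolve_left hcc
  have e8 : 2 * c ^ 3 * g 8 = 0 := by linear_combination h15 + h17 - 2 * h3
  have g8 : g 8 = 0 := (mul_eq_zero.mp e8).resolve_left hcc
  have e1 : c * g 1 = 0 := by linear_combination h3 + (c ^ 3 / 3) * g3 + (c ^ 3 / 3) * g8
  have g1 : g 1 = 0 := (mul_eq_zero.mp e1).resolve_left hc.ne'
  have e4 : 2 * c ^ 3 * g 4 = 0 := by linear_combination h11 - h13 - 2 * h5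
  have g4 : g 4 = 0 := (mul_eq_zero.mp e4).resolve_left hcc
  have e6 : 2 * c ^ 3 * g 6 = 0 := by linear_combination h15 - h17 - 2 * h5
  have g6 : g 6 = 0 := (mul_eq_zero.mp e6).resolve_left hcc
  have e2 : c * g 2 = 0 := by linear_combination h5 + (c ^ 3 / 3) * g4 + (c ^ 3 / 3) * g6
  have g2 : g 2 = 0 := (mul_eq_zero.mp e2).resolve_left hc.ne'
  intro k
  fin_cases k <;> assumption

lemma A19_eq_zero (f : Fin 19 → ℝ) (hf : ∀ i, f (bar19 i) = -f i)
    (h1 : f 1 = 0) (h3 : f 3 = 0) (h5 : f 5 = 0) (h7 : f 7 = 0) (h9 : f 9 = 0)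
    (h11 : f 11 = 0) (h13 : f 13 = 0) (h15 : f 15 = 0) (h17 : f 17 = 0) : f = 0 := by
  have k0 := hf 0
  have k1 := hf 1
  have k3 := hf 3
  have k5 := hf 5
  have k7 := hf 7
  have k9 := hf 9
  have k11 := hf 11
  have k13 := hf 13
  have k15 := hf 15
  have k17 := hf 17
  simp only [bar19e_0, bar19e_1, bar19e_3, bar19e_5, bar19e_7, bar19e_9, bar19e_11,
    bar19e_13, bar19e_15, bar19e_17] at k0 k1 k3 k5 k7 k9 k11 k13 k15 k17
  funext i
  fin_cases i
  · show f 0 = 0; linarith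
  · show f 1 = 0; exact h1
  · show f 2 = 0; simp [k1, h1]
  · show f 3 = 0; exact h3
  · show f 4 = 0; simp [k3, h3]
  · show f 5 = 0; exact h5
  · show f 6 = 0; simp [k5, h5]
  · show f 7 = 0; exact h7
  · show f 8 = 0; simp [k7, h7]
  · show f 9 = 0; exact h9
  · show f 10 = 0; simp [k9, h9]
  · show f 11 = 0; exact h11
  · show f 12 = 0; simp [k11, h11]
  · show f 13 = 0; exact h13
  · show f 14 = 0; simp [k13, h13]
  · show f 15 = 0; exact h15
  · show f 16 = 0; simp [k15, h15]
  · show f 17 = 0; exact h17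
  · show f 18 = 0; simp [k17, h17]

def idx9 : Fin 9 → Fin 19 := ![1, 3, 5, 7, 9, 11, 13, 15, 17]

lemma finrank_A19_le : Module.finrank ℝ A19 ≤ 9 := by
  let L : A19 →ₗ[ℝ] (Fin 9 → ℝ) :=
    { toFun := fun f k => f.1 (idx9 k)
      map_add' := fun a b => rfl
      map_smul' := fun r a => rfl }
  have hinj : Function.Injective L := by
    intro a b hab
    have h : ∀ k : Fin 9, a.1 (idx9 k) - b.1 (idx9 k) = 0 := by
      intro k
      exact sub_eq_zero.mpr (congrFun hab k)
    have hmem : ∀ i, (a.1 - b.1) (bar19 i) = -(a.1 - b.1) i := by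
      intro i
      have ha := (mem_A19_iff _).mp a.2 i
      have hb := (mem_A19_iff _).mp b.2 i
      simp [Pi.sub_apply, ha, hb]; ring
    have h0 := A19_eq_zero (a.1 - b.1) hmem (h 0) (h 1) (h 2) (h 3) (h 4) (h 5) (h 6) (h 7) (h 8)
    exact Subtype.ext (sub_eq_zero.mp h0)
  have := LinearMap.finrank_le_finrank_of_injective hinj
  simpa using this

/-- On D3Q19 the antisymmetric subspace has dimension `9 = D + N₃`
and is exactly spanned by the three first-order and six third-order Hermite modes. -/
theorem d3q19_antisymmetric_complete (c : ℝ) (hc : 0 < c) :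
    Module.finrank ℝ A19 = 9 ∧
    Submodule.span ℝ (Set.range (antisymModes19 c)) = A19 := by
  have hle : Submodule.span ℝ (Set.range (antisymModes19 c)) ≤ A19 := by
    rw [Submodule.span_le]
    rintro _ ⟨k, rfl⟩
    exact modes_mem c k
  have hrank : Module.finrank ℝ (Submodule.span ℝ (Set.range (antisymModes19 c))) = 9 := by
    rw [finrank_span_eq_card (modes_li c hc)]
    simp
  have heq : Submodule.span ℝ (Set.range (antisymModes19 c)) = A19 :=
    Submodule.eq_of_le_of_finrank_le hle (by rw [hrank]; exact finrank_A19_le)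
  exact ⟨by rw [← heq, hrank], heq⟩
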